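/- There exist no real numbers x11, x12 such that X + X* = ad(e5)|_n + (ad(e5)|_n)*, where X = [[x11,x12,0],[-x12,x11,0],[0,0,2 x11]] and * denotes the adjoint with respect to the positive definite form on n with Gram matrix [[497/576,0,-7/12],[0,49/192,0],[-7/12,0,2]] in the basis (e1,e2,e3), and ad(e5)|_n = [[-1,0,0],[0,-1,0],[1,0,-2]]. -/
import Mathlib


open Matrix
open scoped Matrix

noncomputable section

abbrev W : Type := Fin 3 → ℝ

/-- standard basis of `ℝ³` -/
def f (i : Fin 3) : W := Pi.single i 1

/-- the Heisenberg bracket `[e1,e2] = -e3` on `n = span{e1,e2,e3}` -/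
def br3 (x y : W) : W := ![0, 0, -(x 0 * y 1 - x 1 * y 0)]

/-- the Gram matrix of the restricted metric on `n` in the basis `e1,e2,e3` -/
def G3 : Matrix (Fin 3) (Fin 3) ℝ :=
  !![497/576, 0, -7/12;
     0, 49/192, 0;
     -7/12, 0, 2]

/-- the restricted metric on `n` -/
def g3 (x y : W) : ℝ := ∑ i, ∑ j, x i * G3 i j * y j

/-- the metric adjoint `T*` of an endomorphism (as matrices): `T* = G⁻¹ Tᵀ G` -/
def adj (T : Matrix (Fin 3) (Fin 3) ℝ) : Matrix (Fin 3) (Fin 3) ℝ := G3⁻¹ * Tᵀ * G3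

/-- the matrix of `ad(e5)` restricted to `n` -/
def ad5 : Matrix (Fin 3) (Fin 3) ℝ := !![-1, 0, 0; 0, -1, 0; 1, 0, -2]

/-- There are no `x11, x12` with `X + X* = ad(e5)|_n + (ad(e5)|_n)*` for
`X = [[x11,x12,0],[-x12,x11,0],[0,0,2 x11]]`. -/
theorem no_symmetric_correction :
    ¬ ∃ x11 x12 : ℝ,
      (!![x11, x12, 0; -x12, x11, 0; 0, 0, 2 * x11] : Matrix (Fin 3) (Fin 3) ℝ)
        + adj !![x11, x12, 0; -x12, x11, 0; 0, 0, 2 * x11]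
      = ad5 + adj ad5 := by
  have hinv : G3⁻¹ = !![192/133, 0, 8/19; 0, 192/49, 0; 8/19, 0, 71/114] := by
    apply Matrix.inv_eq_right_inv
    show G3 * _ = 1
    rw [G3]
    ext i j
    fin_cases i <;> fin_cases j <;>
      norm_num [Matrix.mul_fin_three, Matrix.one_fin_three]
  rintro ⟨a, b, h⟩
  simp only [adj] at h
  have ht1 : (!![a, b, 0; -b, a, 0; 0, 0, 2 * a] : Matrix (Fin 3) (Fin 3) ℝ)ᵀ
      = !![a, -b, 0; b, a, 0; 0, 0, 2 * a] := by
    ext i j; fin_cases i <;> fin_cases j <;> simp [Matrix.transpose_apply]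
  have ht2 : ad5ᵀ = !![-1, 0, 1; 0, -1, 0; 0, 0, -2] := by
    ext i j; fin_cases i <;> fin_cases j <;> simp [ad5, Matrix.transpose_apply, Matrix.vecHead, Matrix.vecTail]
  rw [hinv, ht1, ht2] at h
  have h00 := congrFun (congrFun h 0) 0
  have h02 := congrFun (congrFun h 0) 2
  norm_num [G3, ad5, Matrix.add_apply, Matrix.mul_apply, Fin.sum_univ_three,
    Matrix.transpose_apply, Matrix.cons_val', Matrix.cons_val_zero, Matrix.cons_val_one,
    Matrix.head_cons, Matrix.empty_val', Matrix.cons_val_fin_one, Matrix.head_fin_const,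
    Matrix.cons_val_two, Matrix.tail_cons, Matrix.of_apply] at h00 h02
  linarith
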